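/- For every DAG G on n vertices and every integer ℓ with 1 ≤ ℓ ≤ n, there exists an ℓ-chain cover of G, i.e., a set 𝒞 of at most ℓ pairwise vertex-disjoint chains of G such that every directed path in G contains at most 2n/ℓ vertices that lie on no chain of 𝒞. -/

import Mathlib

open scoped Classical

/-- An edge of a directed graph on vertex set `Fin n`. -/
abbrev Edge (n : ℕ) := Fin n × Fin n

/-- `l` is a directed path in the graph with edge set `E`:
a sequence of distinct vertices, each consecutive pair joined by an edge. -/
def IsPathList {n : ℕ} (E : Set (Edge n)) (l : List (Fin n)) : Prop :=
  l.Nodup ∧ l.Chain' (fun a b => (a, b) ∈ E)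

/-- `l` is a directed path from `u` to `v` in the graph with edge set `E`. -/
def IsPathFromTo {n : ℕ} (E : Set (Edge n)) (u v : Fin n) (l : List (Fin n)) : Prop :=
  IsPathList E l ∧ l.head? = some u ∧ l.getLast? = some v

/-- `hdist E u v` is the minimum number of edges on a directed path from `u` to `v`
(`⊤` if no such path exists). -/
noncomputable def hdist {n : ℕ} (E : Set (Edge n)) (u v : Fin n) : ℕ∞ :=
  sInf {k : ℕ∞ | ∃ l : List (Fin n), IsPathFromTo E u v l ∧ (l.length : ℕ∞) = k + 1}

/-- `(u, v)` is in the transitive closure: `u ≠ v` and `v` is reachable from `u`. -/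
def TCrel {n : ℕ} (E : Set (Edge n)) (u v : Fin n) : Prop :=
  u ≠ v ∧ ∃ l : List (Fin n), IsPathFromTo E u v l

/-- The transitive closure of the graph with edge set `E`, as a set of pairs. -/
def TCset {n : ℕ} (E : Set (Edge n)) : Set (Edge n) := {p | TCrel E p.1 p.2}

/-- `H` is a shortcut set with hopbound `β` for the graph with edge set `E`. -/
def IsShortcutSet {n : ℕ} (E H : Set (Edge n)) (β : ℕ) : Prop :=
  H ⊆ TCset E ∧ ∀ p ∈ TCset E, hdist (E ∪ H) p.1 p.2 ≤ (β : ℕ∞)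

/-- Reachability in the graph with edge set `E`. -/
def Reaches {n : ℕ} (E : Set (Edge n)) (u v : Fin n) : Prop :=
  Relation.ReflTransGen (fun a b => (a, b) ∈ E) u v

/-- A DAG: a directed graph with no directed cycles. -/
def IsDAG {n : ℕ} (E : Set (Edge n)) : Prop :=
  ∀ u v : Fin n, (u, v) ∈ E → ¬ Reaches E v u

/-- A chain: a sequence of distinct vertices each consecutive pair of which
lies in the transitive closure. -/
def IsChainIn {n : ℕ} (E : Set (Edge n)) (C : List (Fin n)) : Prop :=
  C.Nodup ∧ C.Chain' (fun a b => TCrel E a b)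

/-- An `ℓ`-chain cover: a set of at most `ℓ` pairwise vertex-disjoint chains such that
every directed path contains at most `2n/ℓ` vertices lying on no chain. -/
def IsChainCover {n : ℕ} (E : Set (Edge n)) (ℓ : ℕ) (𝒞 : Set (List (Fin n))) : Prop :=
  𝒞.Finite ∧ 𝒞.ncard ≤ ℓ ∧ (∀ C ∈ 𝒞, IsChainIn E C) ∧
  (∀ C₁ ∈ 𝒞, ∀ C₂ ∈ 𝒞, C₁ ≠ C₂ → ∀ x : Fin n, x ∈ C₁ → x ∉ C₂) ∧
  ∀ P : List (Fin n), IsPathList E P →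
    ({x : Fin n | x ∈ P ∧ ∀ C ∈ 𝒞, x ∉ C}.ncard : ℝ) ≤ 2 * n / ℓ


section AuxChainCover

variable {n : ℕ} {E : Set (Edge n)}

open List in
/-- On a path, every earlier vertex is TC-related to every later vertex. -/
lemma pairwise_TCrel_of_path : ∀ {P : List (Fin n)}, IsPathList E P → P.Pairwise (TCrel E)
  | [], _ => List.Pairwise.nil
  | a :: t, ⟨hnd, hch⟩ => by
    rw [List.pairwise_cons]
    have hnd' := List.nodup_cons.mp hnd
    refine ⟨?_, pairwise_TCrel_of_path ⟨hnd'.2, hch.tail⟩⟩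
    intro b hb
    obtain ⟨s, u, rfl⟩ := List.append_of_mem hb
    have hne : a ≠ b := fun h => hnd'.1 (h ▸ hb)
    refine ⟨hne, a :: (s ++ [b]), ⟨⟨?_, ?_⟩, rfl, ?_⟩⟩
    · refine hnd.sublist ?_
      exact List.cons_sublist_cons.mpr
        (List.Sublist.append_left (List.cons_sublist_cons.mpr (List.nil_sublist u)) s)
    · refine hch.prefix ⟨u, ?_⟩
      simp
    · show (((a :: s) ++ [b]) : List (Fin n)).getLast? = some b
      rw [List.getLast?_concat]
  termination_by P => P.length

lemma chain_of_sublist_path {P C : List (Fin n)} (hP : IsPathList E P) (h : List.Sublist C P) :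
    IsChainIn E C :=
  ⟨hP.1.sublist h, ((pairwise_TCrel_of_path hP).sublist h).isChain⟩

end AuxChainCover

/-- Every DAG on `n` vertices and every integer `1 ≤ ℓ ≤ n` admit an
`ℓ`-chain cover. -/
theorem chain_cover_exists :
    ∀ (n : ℕ) (E : Set (Edge n)), IsDAG E →
      ∀ ℓ : ℕ, 1 ≤ ℓ → ℓ ≤ n →
        ∃ 𝒞 : Set (List (Fin n)), IsChainCover E ℓ 𝒞 := by
  intro n E _hDAG ℓ hℓ1 hℓn
  classical
  -- the finite set of all paths
  have hfin : {l : List (Fin n) | IsPathList E l}.Finite := by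
    apply (List.finite_length_le (Fin n) n).subset
    intro l hl
    simpa using hl.1.length_le_card
  set Paths : Finset (List (Fin n)) := hfin.toFinset with hPathsDef
  have hPmem : ∀ l, l ∈ Paths ↔ IsPathList E l := by
    intro l; simp [hPathsDef]
  have hPne : Paths.Nonempty := ⟨[], (hPmem []).mpr ⟨List.nodup_nil, List.isChain_nil⟩⟩
  -- the maximum number of remaining vertices on a path
  set f : Set (Fin n) → ℕ :=
    fun R => Paths.sup fun P => (P.filter (fun x => x ∈ R)).length with hfDef
  have hbest : ∀ R : Set (Fin n), ∃ P ∈ Paths, (P.filter (fun x => x ∈ R)).length = f R := by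
    intro R
    obtain ⟨P, hP, hPe⟩ :=
      Finset.exists_mem_eq_sup Paths hPne (fun P => (P.filter (fun x => x ∈ R)).length)
    exact ⟨P, hP, hPe.symm⟩
  choose bp hbp1 hbp2 using hbest
  set ch : Set (Fin n) → List (Fin n) := fun R => (bp R).filter (fun x => x ∈ R) with hchDef
  -- the greedy recursion on remaining vertex sets
  set Rk : ℕ → Set (Fin n) :=
    fun k => Nat.rec Set.univ (fun _ R => R \ {x | x ∈ ch R}) k with hRkDef
  have hRk0 : Rk 0 = Set.univ := rfl
  have hRkS : ∀ k, Rk (k + 1) = Rk k \ {x | x ∈ ch (Rk k)} := fun k => rfl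
  have hRmono : ∀ j k, j ≤ k → Rk k ⊆ Rk j := by
    intro j k hjk
    induction k with
    | zero => simp_all
    | succ m ih =>
      rcases Nat.lt_or_ge j (m + 1) with h | h
      · exact ((hRkS m) ▸ Set.diff_subset).trans (ih (Nat.lt_succ_iff.mp h))
      · have : j = m + 1 := le_antisymm hjk h
        subst this; exact subset_rfl
  -- f is monotone
  have hfmono : ∀ R R' : Set (Fin n), R' ⊆ R → f R' ≤ f R := by
    intro R R' hsub
    apply Finset.sup_mono_fun
    intro P _
    exact (List.monotone_filter_right P (fun a ha => by
      simp only [decide_eq_true_eq] at ha ⊢; exact hsub ha)).length_le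
  -- every path's remaining-vertex count is at most f R
  have hfle : ∀ R : Set (Fin n), ∀ P, IsPathList E P →
      (P.filter (fun x => x ∈ R)).length ≤ f R := by
    intro R P hP
    exact Finset.le_sup (f := fun P => (P.filter (fun x => x ∈ R)).length) ((hPmem P).mpr hP)
  have hchmem : ∀ R (x : Fin n), x ∈ ch R → x ∈ R := by
    intro R x hx
    have := List.mem_filter.mp hx
    simpa using this.2
  have hchpath : ∀ R, IsChainIn E (ch R) :=
    fun R => chain_of_sublist_path ((hPmem _).mp (hbp1 R)) List.filter_sublist
  -- membership of the remaining sets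
  have hmemRk : ∀ k (x : Fin n), x ∈ Rk k ↔ ∀ j < k, x ∉ ch (Rk j) := by
    intro k
    induction k with
    | zero => simp [hRk0]
    | succ m ih =>
      intro x
      rw [hRkS m]
      constructor
      · rintro ⟨hx1, hx2⟩ j hj
        rcases Nat.lt_or_ge j m with h | h
        · exact (ih x).mp hx1 j h
        · have : j = m := le_antisymm (Nat.lt_succ_iff.mp hj) h
          subst this; exact hx2
      · intro h
        exact ⟨(ih x).mpr (fun j hj => h j (hj.trans (Nat.lt_succ_self m))),
          h m (Nat.lt_succ_self m)⟩
  -- disjointness across steps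
  have hdisj : ∀ j k, j < k → ∀ x : Fin n, x ∈ ch (Rk j) → x ∉ ch (Rk k) := by
    intro j k hjk x hxj hxk
    have hxRk : x ∈ Rk k := hchmem _ _ hxk
    have := (hmemRk k x).mp hxRk j hjk
    exact this hxj
  -- the chain cover
  set Cs : Finset (List (Fin n)) := (Finset.range ℓ).image (fun k => ch (Rk k)) with hCsDef
  refine ⟨↑Cs, Cs.finite_toSet, ?_, ?_, ?_, ?_⟩
  · rw [Set.ncard_coe_finset]
    exact (Finset.card_image_le).trans (by simp)
  · intro C hC
    simp only [Finset.coe_image, Set.mem_image, hCsDef, Finset.mem_coe,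
      Finset.mem_image] at hC
    obtain ⟨k, _, rfl⟩ := hC
    exact hchpath _
  · intro C₁ hC₁ C₂ hC₂ hne x hx1 hx2
    simp only [hCsDef, Finset.mem_coe, Finset.mem_image] at hC₁ hC₂
    obtain ⟨j, _, rfl⟩ := hC₁
    obtain ⟨k, _, rfl⟩ := hC₂
    rcases lt_trichotomy j k with h | h | h
    · exact hdisj j k h x hx1 hx2
    · exact hne (by rw [h])
    · exact hdisj k j h x hx2 hx1
  · intro P hP
    -- identify the uncovered set
    have hset : {x : Fin n | x ∈ P ∧ ∀ C ∈ (↑Cs : Set (List (Fin n))), x ∉ C}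
        = ↑(P.filter (fun x => x ∈ Rk ℓ)).toFinset := by
      ext x
      simp only [Set.mem_setOf_eq, Finset.coe_sort_coe, List.coe_toFinset,
        Set.mem_setOf_eq, List.mem_filter, decide_eq_true_eq]
      constructor
      · rintro ⟨hxP, hxC⟩
        have hin : x ∈ Rk ℓ := (hmemRk ℓ x).mpr (fun j hj => hxC (ch (Rk j)) (by
          simp only [hCsDef, Finset.mem_coe, Finset.mem_image]
          exact ⟨j, Finset.mem_range.mpr hj, rfl⟩))
        exact ⟨hxP, by simpa using hin⟩
      · rintro ⟨hxP, hxR⟩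
        refine ⟨hxP, ?_⟩
        intro C hC
        simp only [hCsDef, Finset.mem_coe, Finset.mem_image] at hC
        obtain ⟨j, hj, rfl⟩ := hC
        have hxR' : x ∈ Rk ℓ := by simpa using hxR
        exact (hmemRk ℓ x).mp hxR' j (Finset.mem_range.mp hj)
    rw [hset]
    have hcard : ((P.filter (fun x => x ∈ Rk ℓ)).toFinset : Set (Fin n)).ncard
        ≤ f (Rk ℓ) := by
      rw [Set.ncard_coe_finset]
      exact (List.toFinset_card_le _).trans (hfle (Rk ℓ) P hP)
    -- ℓ * f (Rk ℓ) ≤ n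
    have hsum : ℓ * f (Rk ℓ) ≤ n := by
      have hFdisj : ∀ j ∈ Finset.range ℓ, ∀ k ∈ Finset.range ℓ, j ≠ k →
          Disjoint ((ch (Rk j)).toFinset) ((ch (Rk k)).toFinset) := by
        intro j _ k _ hjk
        rw [Finset.disjoint_left]
        intro x hxj hxk
        rcases lt_or_gt_of_ne hjk with h | h
        · exact hdisj j k h x (List.mem_toFinset.mp hxj) (List.mem_toFinset.mp hxk)
        · exact hdisj k j h x (List.mem_toFinset.mp hxk) (List.mem_toFinset.mp hxj)
      have hcardsum : ∑ k ∈ Finset.range ℓ, ((ch (Rk k)).toFinset).card ≤ n := by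
        rw [← Finset.card_biUnion hFdisj]
        simpa using Finset.card_le_univ ((Finset.range ℓ).biUnion
          fun k => (ch (Rk k)).toFinset)
      have hlen : ∀ k ∈ Finset.range ℓ, f (Rk ℓ) ≤ ((ch (Rk k)).toFinset).card := by
        intro k hk
        have hnd : (ch (Rk k)).Nodup := (hchpath (Rk k)).1
        rw [List.card_toFinset, hnd.dedup]
        calc f (Rk ℓ) ≤ f (Rk k) :=
              hfmono _ _ (hRmono k ℓ (le_of_lt (Finset.mem_range.mp hk)))
          _ = (ch (Rk k)).length := (hbp2 (Rk k)).symm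
      calc ℓ * f (Rk ℓ) = ∑ _k ∈ Finset.range ℓ, f (Rk ℓ) := by
            rw [Finset.sum_const, Finset.card_range, smul_eq_mul]
        _ ≤ ∑ k ∈ Finset.range ℓ, ((ch (Rk k)).toFinset).card :=
            Finset.sum_le_sum hlen
        _ ≤ n := hcardsum
    -- conclude in ℝ
    have hℓpos : (0 : ℝ) < ℓ := by exact_mod_cast hℓ1
    calc (((P.filter (fun x => x ∈ Rk ℓ)).toFinset : Set (Fin n)).ncard : ℝ)
          ≤ (f (Rk ℓ) : ℝ) := by exact_mod_cast hcard
        _ ≤ 2 * n / ℓ := by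
            rw [le_div_iff₀ hℓpos]
            have h1 : (f (Rk ℓ) : ℝ) * ℓ ≤ n := by
              rw [mul_comm]; exact_mod_cast hsum
            have h2 : (n : ℝ) ≤ 2 * n := by nlinarith [Nat.cast_nonneg (α := ℝ) n]
            linarith
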